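/- Completeness of the value of control criterion, non-decision-path case: if a CID has a directed path ρ from X to a utility node U not passing through the decision D, then the SCIM with all domains {0,1}, X ≡ 0, each node on ρ copying its predecessor, and all other variables constantly 0, satisfies: the maximum expected utility over policies is 0, but under the soft intervention setting X to 1 it is 1; hence X has positive value of control. -/

import Mathlib

/-!
Take Boolean variables, trivial noise, `X` constantly `false`, and let every node reachable from
`X` along edges avoiding `D` copy one reachable parent. The solution is then constant on that
reachable set, which contains `u` but not `D`, so whatever the policy, `u` equals `X`: utility `0`.
Replacing the structural function of `X` by the constant `true` propagates the same way to `u`,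
giving utility `1` for every policy.
-/

attribute [local instance] Classical.propDecidable

noncomputable section

/-- Acyclicity of a directed graph. -/
def Acyclic {V : Type} (E : V → V → Prop) : Prop := ∀ v, ¬ Relation.TransGen E v v

/-- A walk in the digraph: a nonempty list of vertices where consecutive
vertices are joined by an edge in some direction. -/
def IsWalk {V : Type} (E : V → V → Prop) (p : List V) : Prop :=
  p ≠ [] ∧ p.Chain' (fun a b => E a b ∨ E b a)

/-- A consecutive triple `a, b, c` blocks a path w.r.t. `S` if `b` is a collider
with no descendant (including itself) in `S`, or a non-collider in `S`. -/
def BlockedTriple {V : Type} (E : V → V → Prop) (S : Set V) (a b c : V) : Prop :=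
  (E a b ∧ E c b ∧ ∀ w, Relation.ReflTransGen E b w → w ∉ S) ∨
  (¬ (E a b ∧ E c b) ∧ b ∈ S)

/-- A path is d-separated (blocked) by `S`. -/
def BlocksPath {V : Type} (E : V → V → Prop) (S : Set V) (p : List V) : Prop :=
  (∃ x, p.head? = some x ∧ x ∈ S) ∨ (∃ x, p.getLast? = some x ∧ x ∈ S) ∨
  (∃ l a b c r, p = l ++ a :: b :: c :: r ∧ BlockedTriple E S a b c)

/-- `A` is d-separated from `B` given `S`. -/
def DSep {V : Type} (E : V → V → Prop) (A B S : Set V) : Prop :=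
  ∀ p : List V, IsWalk E p → (∃ a ∈ A, p.head? = some a) →
    (∃ b ∈ B, p.getLast? = some b) → BlocksPath E S p

/-- An observation `X ∈ Pa_D` is requisite in the graph `E` with decision `D` and
utility nodes `U` if it is d-connected to the downstream utilities `U ∩ Desc(D)`
given the other observations and the decision, `(Pa_D ∪ {D}) \ {X}`. -/
def RequisiteG {V : Type} (E : V → V → Prop) (D : V) (U : Set V) (X : V) : Prop :=
  E X D ∧ ¬ DSep E {X} {u | u ∈ U ∧ Relation.ReflTransGen E D u}
      {v | (E v D ∧ v ≠ X) ∨ v = D}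

/-- The edge relation of the minimal reduction: all information links from
nonrequisite observations are removed. -/
def ReducedEdge {V : Type} (E : V → V → Prop) (D : V) (U : Set V) : V → V → Prop :=
  fun a b => E a b ∧ (b = D → RequisiteG E D U a)

variable {V : Type} [Fintype V] [DecidableEq V]

/-- A single-decision structural causal influence model (SCIM): a causal
influence diagram (DAG with a decision node `D` and childless utility nodes
`Util` whose values are interpreted in `ℝ` via `utilReal`), finite nonempty
domains, structural functions for all non-decision nodes depending only on
parents, and mutually independent finitely-supported exogenous variables. -/
structure SCIM (V : Type) [Fintype V] [DecidableEq V] where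
  Edge : V → V → Prop
  acyclic : Acyclic Edge
  D : V
  Util : Finset V
  utilNotD : D ∉ Util
  utilNoChild : ∀ u ∈ Util, ∀ v, ¬ Edge u v
  Dom : V → Type
  domFin : ∀ v, Fintype (Dom v)
  domNE : ∀ v, Nonempty (Dom v)
  utilReal : (u : V) → Dom u → ℝ
  ExoDom : V → Type
  exoFin : ∀ v, Fintype (ExoDom v)
  exoNE : ∀ v, Nonempty (ExoDom v)
  f : (v : V) → ((p : V) → Dom p) → ExoDom v → Dom v
  localDep : ∀ v a a' e, (∀ p, Edge p v → a p = a' p) → f v a e = f v a' e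
  P : (v : V) → ExoDom v → ℝ
  Pnonneg : ∀ v e, 0 ≤ P v e
  Psum : ∀ v, ∑ e ∈ (exoFin v).elems, P v e = 1

namespace SCIM

variable (M : SCIM V)

/-- Joint (product) probability of an exogenous setting. -/
def Pjoint (ε : ∀ v, M.ExoDom v) : ℝ := ∏ v, M.P v (ε v)

/-- All exogenous settings. -/
def exoElems : Finset (∀ v, M.ExoDom v) :=
  letI := M.exoFin; Finset.univ

/-- A default assignment of values. -/
def dflt : ∀ v, M.Dom v := fun v => (M.domNE v).some

/-- `a` solves the system of structural equations `g` at exogenous setting `ε`. -/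
def Solves (g : (v : V) → ((p : V) → M.Dom p) → M.ExoDom v → M.Dom v)
    (ε : ∀ v, M.ExoDom v) (a : ∀ v, M.Dom v) : Prop :=
  ∀ v, a v = g v a (ε v)

/-- The (unique, by acyclicity) solution of the structural equations `g`
at `ε`: the values of all endogenous variables obtained by recursive
application of the structural functions. -/
def sol (g : (v : V) → ((p : V) → M.Dom p) → M.ExoDom v → M.Dom v)
    (ε : ∀ v, M.ExoDom v) : ∀ v, M.Dom v :=
  if h : ∃ a, M.Solves g ε a then h.choose else M.dflt

/-- Replace the structural function at node `X` by `gX` (a soft intervention). -/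
def replaceAt (g : (v : V) → ((p : V) → M.Dom p) → M.ExoDom v → M.Dom v) (X : V)
    (gX : ((p : V) → M.Dom p) → M.ExoDom X → M.Dom X) :
    (v : V) → ((p : V) → M.Dom p) → M.ExoDom v → M.Dom v :=
  fun v => if h : v = X then (by subst h; exact gX) else g v

/-- Hard intervention do(`X` = `x`): constant functions on `X`. -/
def doSet (g : (v : V) → ((p : V) → M.Dom p) → M.ExoDom v → M.Dom v)
    (X : Set V) (x : ∀ v, M.Dom v) :
    (v : V) → ((p : V) → M.Dom p) → M.ExoDom v → M.Dom v :=
  fun v => if v ∈ X then fun _ _ => x v else g v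

/-- A policy: a structural function for `D` that depends only on the
observations `Pa_D` (and the exogenous variable of `D`). -/
def IsPolicy (π : ((p : V) → M.Dom p) → M.ExoDom M.D → M.Dom M.D) : Prop :=
  ∀ a a' e, (∀ p, M.Edge p M.D → a p = a' p) → π a e = π a' e

/-- The policy-completed system of structural functions. -/
def gpol (π : ((p : V) → M.Dom p) → M.ExoDom M.D → M.Dom M.D) :
    (v : V) → ((p : V) → M.Dom p) → M.ExoDom v → M.Dom v :=
  M.replaceAt M.f M.D π

/-- Total utility of an assignment: the sum of the utility-node values. -/
def TotalU (a : ∀ v, M.Dom v) : ℝ := ∑ u ∈ M.Util, M.utilReal u (a u)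

/-- Expected total utility of a system of structural equations `g`. -/
def EUg (g : (v : V) → ((p : V) → M.Dom p) → M.ExoDom v → M.Dom v) : ℝ :=
  ∑ ε ∈ M.exoElems, M.Pjoint ε * M.TotalU (M.sol g ε)

/-- Expected total utility of a policy. -/
def EU (π : ((p : V) → M.Dom p) → M.ExoDom M.D → M.Dom M.D) : ℝ :=
  M.EUg (M.gpol π)

/-- An optimal policy maximizes expected total utility. -/
def IsOptimal (π : ((p : V) → M.Dom p) → M.ExoDom M.D → M.Dom M.D) : Prop :=
  M.IsPolicy π ∧ ∀ π', M.IsPolicy π' → M.EU π' ≤ M.EU π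

/-- Probability of an event over exogenous settings. -/
def PrEv (Ev : (∀ v, M.ExoDom v) → Prop) : ℝ :=
  ∑ ε ∈ M.exoElems, if Ev ε then M.Pjoint ε else 0

/-- Conditional expectation of `h` given the event `Ev`. -/
def condExp (h : (∀ v, M.ExoDom v) → ℝ) (Ev : (∀ v, M.ExoDom v) → Prop) : ℝ :=
  (∑ ε ∈ M.exoElems, if Ev ε then M.Pjoint ε * h ε else 0) / M.PrEv Ev

/-- Conditional probability of `h` given `Ev`. -/
def condProb (h Ev : (∀ v, M.ExoDom v) → Prop) : ℝ :=
  M.PrEv (fun ε => h ε ∧ Ev ε) / M.PrEv Ev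

/-- The event that the decision context (the observations `Pa_D`) takes the
values `pa`, under policy `π`. -/
def CtxEvent (π : ((p : V) → M.Dom p) → M.ExoDom M.D → M.Dom M.D)
    (pa : ∀ v, M.Dom v) (ε : ∀ v, M.ExoDom v) : Prop :=
  ∀ p, M.Edge p M.D → M.sol (M.gpol π) ε p = pa p

/-- The potential response under the hard intervention do(`X` = `x`),
in the policy-completed model: an assignment to all variables. -/
def response (π : ((p : V) → M.Dom p) → M.ExoDom M.D → M.Dom M.D)
    (X : V) (x : M.Dom X) (ε : ∀ v, M.ExoDom v) : ∀ v, M.Dom v :=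
  M.sol (M.doSet (M.gpol π) {X} (Function.update M.dflt X x)) ε

/-- The nested-counterfactual assignment realizing `U_{X_d}`: intervene on `X`
with the value `X_d(ε)` it would take under do(`D` = `d`). -/
def nestedSol (π : ((p : V) → M.Dom p) → M.ExoDom M.D → M.Dom M.D)
    (X : V) (d : M.Dom M.D) (ε : ∀ v, M.ExoDom v) : ∀ v, M.Dom v :=
  M.response π X (M.response π M.D d ε X) ε

/-- Instrumental control incentive on `X`: in some decision context `pa`
(of positive probability), every optimal policy has
`E[U_{X_d} | pa] ≠ E[U | pa]` for some `d`. -/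
def HasICI (X : V) : Prop :=
  ∃ pa : ∀ v, M.Dom v, ∀ π, M.IsOptimal π →
    0 < M.PrEv (M.CtxEvent π pa) ∧
    ∃ d : M.Dom M.D,
      M.condExp (fun ε => M.TotalU (M.nestedSol π X d ε)) (M.CtxEvent π pa) ≠
      M.condExp (fun ε => M.TotalU (M.sol (M.gpol π) ε)) (M.CtxEvent π pa)

/-- A policy that does not use the information link `X → D`. -/
def IsPolicyWithout (X : V)
    (π : ((p : V) → M.Dom p) → M.ExoDom M.D → M.Dom M.D) : Prop :=
  M.IsPolicy π ∧ ∀ a a' e, (∀ p, M.Edge p M.D → p ≠ X → a p = a' p) → π a e = π a' e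

/-- Counterfactual fairness of policy `π` w.r.t. sensitive attribute `A`:
`Pr(D_{a'} = d | pa_D, a) = Pr(D = d | pa_D, a)` for all `d`, contexts `pa_D`,
and attribute values `a, a'` with positive probability of the conditioning event. -/
def CFair (π : ((p : V) → M.Dom p) → M.ExoDom M.D → M.Dom M.D) (A : V) : Prop :=
  ∀ (d : M.Dom M.D) (pa : ∀ v, M.Dom v) (a a' : M.Dom A),
    0 < M.PrEv (fun ε => M.CtxEvent π pa ε ∧ M.sol (M.gpol π) ε A = a) →
    M.condProb (fun ε => M.response π A a' ε M.D = d)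
        (fun ε => M.CtxEvent π pa ε ∧ M.sol (M.gpol π) ε A = a) =
    M.condProb (fun ε => M.sol (M.gpol π) ε M.D = d)
        (fun ε => M.CtxEvent π pa ε ∧ M.sol (M.gpol π) ε A = a)

end SCIM

theorem Acyclic.wellFounded {V : Type} [Finite V] {E : V → V → Prop} (h : Acyclic E) :
    WellFounded E :=
  haveI : IsTrans V (Relation.TransGen E) := ⟨fun _ _ _ => Relation.TransGen.trans⟩
  haveI : Std.Irrefl (Relation.TransGen E) := ⟨h⟩
  (Finite.wellFounded_of_trans_of_irrefl _).mono fun _ _ => Relation.TransGen.single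

theorem Relation.ReflTransGen.eq_of_copy {V β : Type} {R : V → V → Prop} (hwf : WellFounded R)
    {X : V} {a : V → β}
    (hcopy : ∀ v, ReflTransGen R X v → v ≠ X → ∃ p, ReflTransGen R X p ∧ R p v ∧ a v = a p) :
    ∀ v, ReflTransGen R X v → a v = a X := by
  intro v
  induction v using hwf.induction with
  | _ v ih =>
    intro hv
    by_cases hvX : v = X
    · rw [hvX]
    · obtain ⟨p, hp, hpv, hav⟩ := hcopy v hv hvX
      exact hav.trans (ih p hpv hp)

def reachableParent {V : Type} (R : V → V → Prop) (X v : V) : V :=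
  if h : ∃ p, Relation.ReflTransGen R X p ∧ R p v then h.choose else v

theorem reachableParent_spec {V : Type} {R : V → V → Prop} {X v : V}
    (hv : Relation.ReflTransGen R X v) (hvX : v ≠ X) :
    Relation.ReflTransGen R X (reachableParent R X v) ∧ R (reachableParent R X v) v := by
  have h : ∃ p, Relation.ReflTransGen R X p ∧ R p v := hv.cases_tail.resolve_left hvX
  rw [reachableParent, dif_pos h]
  exact h.choose_spec

namespace SCIM

variable (M : SCIM V)

def IsLocal (g : (v : V) → ((p : V) → M.Dom p) → M.ExoDom v → M.Dom v) : Prop :=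
  ∀ v a a' e, (∀ p, M.Edge p v → a p = a' p) → g v a e = g v a' e

theorem sol_solves {g : (v : V) → ((p : V) → M.Dom p) → M.ExoDom v → M.Dom v}
    (hg : M.IsLocal g) (ε : ∀ v, M.ExoDom v) : M.Solves g ε (M.sol g ε) := by
  have hex : ∃ a, M.Solves g ε a := by
    refine ⟨M.acyclic.wellFounded.fix
      (fun v IH => g v (fun p => if h : M.Edge p v then IH p h else M.dflt p) (ε v)), fun v => ?_⟩
    rw [WellFounded.fix_eq]
    exact hg v _ _ _ fun p hp => by rw [dif_pos hp]
  rw [sol, dif_pos hex]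
  exact hex.choose_spec

@[simp]
theorem replaceAt_self (g : (v : V) → ((p : V) → M.Dom p) → M.ExoDom v → M.Dom v) (X : V)
    (gX : ((p : V) → M.Dom p) → M.ExoDom X → M.Dom X) : M.replaceAt g X gX X = gX := by
  simp [replaceAt]

theorem replaceAt_of_ne (g : (v : V) → ((p : V) → M.Dom p) → M.ExoDom v → M.Dom v) {X v : V}
    (gX : ((p : V) → M.Dom p) → M.ExoDom X → M.Dom X) (h : v ≠ X) :
    M.replaceAt g X gX v = g v := by
  simp [replaceAt, h]

theorem IsLocal.replaceAt {M : SCIM V} {g : (v : V) → ((p : V) → M.Dom p) → M.ExoDom v → M.Dom v}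
    (hg : M.IsLocal g) {X : V} {gX : ((p : V) → M.Dom p) → M.ExoDom X → M.Dom X}
    (hX : ∀ a a' e, (∀ p, M.Edge p X → a p = a' p) → gX a e = gX a' e) :
    M.IsLocal (M.replaceAt g X gX) := by
  intro v a a' e h
  by_cases hv : v = X
  · subst hv
    simpa using hX a a' e h
  · simpa [replaceAt_of_ne _ _ _ hv] using hg v a a' e h

theorem isLocal_gpol {π : ((p : V) → M.Dom p) → M.ExoDom M.D → M.Dom M.D} (hπ : M.IsPolicy π) :
    M.IsLocal (M.gpol π) :=
  IsLocal.replaceAt M.localDep hπ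

theorem sum_Pjoint : ∑ ε ∈ M.exoElems, M.Pjoint ε = 1 := by
  let := M.exoFin
  calc ∑ ε ∈ M.exoElems, M.Pjoint ε = ∏ v, ∑ e, M.P v e := (Fintype.prod_sum _).symm
    _ = 1 := Finset.prod_eq_one fun v _ => M.Psum v

theorem EUg_eq_of_forall_TotalU_eq {g : (v : V) → ((p : V) → M.Dom p) → M.ExoDom v → M.Dom v}
    {c : ℝ} (h : ∀ ε, M.TotalU (M.sol g ε) = c) : M.EUg g = c := by
  simp only [EUg, h, ← Finset.sum_mul, sum_Pjoint, one_mul]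

end SCIM

section CopyModel

variable (E : V → V → Prop) (hac : Acyclic E) (D : V) (Util : Finset V) (hD : D ∉ Util)
  (hchild : ∀ u ∈ Util, ∀ v, ¬ E u v) {R : V → V → Prop} (hRE : ∀ a b, R a b → E a b) (X u : V)

/-- The paper's path model, with the path widened to everything `R`-reachable from `X`: each such
node other than `X` copies a reachable `R`-parent, all other nodes are `false`, the noise is
trivial, and the only utility is the indicator of `u`. -/
def copyModel : SCIM V where
  Edge := E
  acyclic := hac
  D := D
  Util := Util
  utilNotD := hD
  utilNoChild := hchild
  Dom := fun _ => Bool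
  domFin := fun _ => inferInstance
  domNE := fun _ => inferInstance
  utilReal := fun w b => if w = u then b.toNat else 0
  ExoDom := fun _ => Unit
  exoFin := fun _ => inferInstance
  exoNE := fun _ => inferInstance
  f := fun v a _ =>
    if Relation.ReflTransGen R X v ∧ v ≠ X then a (reachableParent R X v) else false
  localDep := by
    intro v a a' e h
    by_cases hv : Relation.ReflTransGen R X v ∧ v ≠ X
    · simp only [if_pos hv]
      exact h _ (hRE _ _ (reachableParent_spec hv.1 hv.2).2)
    · simp only [if_neg hv]
  P := fun _ _ => 1
  Pnonneg := fun _ _ => zero_le_one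
  Psum := fun _ => by simp; rfl

local notation "M" => copyModel E hac D Util hD hchild hRE X u

variable {E hac D Util hD hchild hRE X u}

theorem copyModel_TotalU (hu : u ∈ Util) (a : ∀ v, (M).Dom v) :
    (M).TotalU a = (a u).toNat := by
  simp [SCIM.TotalU, copyModel, hu]

theorem copyModel_sol_eq_of_reachable
    {g : (v : V) → ((p : V) → (M).Dom p) → (M).ExoDom v → (M).Dom v} (hg : (M).IsLocal g)
    (hgf : ∀ v, Relation.ReflTransGen R X v → v ≠ X → g v = (M).f v) (ε : ∀ v, (M).ExoDom v) :
    ∀ v, Relation.ReflTransGen R X v → ((M).sol g ε v : Bool) = (M).sol g ε X := by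
  refine Relation.ReflTransGen.eq_of_copy (hac.wellFounded.mono hRE) fun v hv hvX => ?_
  refine ⟨_, (reachableParent_spec hv hvX).1, (reachableParent_spec hv hvX).2, ?_⟩
  rw [(M).sol_solves hg ε v, hgf v hv hvX]
  simp [copyModel, hv, hvX]

theorem copyModel_EUg (hu : u ∈ Util) (hXu : Relation.ReflTransGen R X u)
    {g : (v : V) → ((p : V) → (M).Dom p) → (M).ExoDom v → (M).Dom v} (hg : (M).IsLocal g)
    (hgf : ∀ v, Relation.ReflTransGen R X v → v ≠ X → g v = (M).f v) {b : Bool}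
    (hX : ∀ ε, ((M).sol g ε X : Bool) = b) :
    (M).EUg g = b.toNat :=
  (M).EUg_eq_of_forall_TotalU_eq fun ε => by
    rw [copyModel_TotalU hu,
      copyModel_sol_eq_of_reachable hg hgf ε u hXu, hX]

end CopyModel

/-- value of control completeness, non-decision-path case: if
the CID has a directed path from `X` to a utility node `u` avoiding the decision
`D`, then there is a compatible SCIM with Boolean domains in which every policy
attains expected utility `0`, while some soft intervention `gX` at `X` yields
expected utility `1` for every policy; hence `X` has positive value of control. -/
theorem voc_completeness_nondecision_path {V : Type} [Fintype V] [DecidableEq V]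
    (E : V → V → Prop) (hac : Acyclic E) (D : V) (Util : Finset V)
    (hD : D ∉ Util) (hchild : ∀ u ∈ Util, ∀ v, ¬ E u v)
    (X : V) (hXD : X ≠ D) (u : V) (hu : u ∈ Util)
    (hpath : Relation.ReflTransGen (fun a b => E a b ∧ a ≠ D ∧ b ≠ D) X u) :
    ∃ M : SCIM V, M.Edge = E ∧ M.D = D ∧ M.Util = Util ∧
      (∀ v, M.Dom v = Bool) ∧
      (∀ π, M.IsPolicy π → M.EU π = 0) ∧
      ∃ gX : ((p : V) → M.Dom p) → M.ExoDom X → M.Dom X,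
        (∀ a a' e, (∀ p, M.Edge p X → a p = a' p) → gX a e = gX a' e) ∧
        (∀ π, M.IsPolicy π → M.EUg (M.replaceAt (M.gpol π) X gX) = 1) := by
  have hreach_ne : ∀ v, Relation.ReflTransGen (fun a b => E a b ∧ a ≠ D ∧ b ≠ D) X v →
      v ≠ X → v ≠ D := fun v hv hvX => by
    obtain ⟨c, -, hcv⟩ := hv.cases_tail.resolve_left hvX
    exact hcv.2.2
  let M := copyModel E hac D Util hD hchild (R := fun a b => E a b ∧ a ≠ D ∧ b ≠ D)
    (fun _ _ h => h.1) X u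
  have hgpol : ∀ π, ∀ v, Relation.ReflTransGen (fun a b => E a b ∧ a ≠ D ∧ b ≠ D) X v →
      v ≠ X → M.gpol π v = M.f v := fun π v hv hvX =>
    M.replaceAt_of_ne _ _ (hreach_ne v hv hvX)
  refine ⟨M, rfl, rfl, rfl, fun _ => rfl, fun π hπ => ?_, fun _ _ => true, fun _ _ _ _ => rfl,
    fun π hπ => ?_⟩
  · have hX : ∀ ε, (M.sol (M.gpol π) ε X : Bool) = false := fun ε => by
      rw [M.sol_solves (M.isLocal_gpol hπ) ε X, SCIM.gpol, M.replaceAt_of_ne (X := M.D) _ _ hXD]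
      simp [M, copyModel]
    simpa [SCIM.EU] using
      copyModel_EUg hu hpath (M.isLocal_gpol hπ) (hgpol π) hX
  · have hlocal : M.IsLocal (M.replaceAt (M.gpol π) X fun _ _ => true) :=
      (M.isLocal_gpol hπ).replaceAt fun _ _ _ _ => rfl
    have hX : ∀ ε, (M.sol (M.replaceAt (M.gpol π) X fun _ _ => true) ε X : Bool) = true :=
      fun ε => by rw [M.sol_solves hlocal ε X]; simp [SCIM.replaceAt]; rfl
    simpa using copyModel_EUg hu hpath hlocal
      (fun v hv hvX => (M.replaceAt_of_ne _ _ hvX).trans (hgpol π v hv hvX)) hX
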